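/- For every integer n ≥ 1, the number N_n of B_n-partitions without zero-block is given by the convergent series N_n = (1/√e) · Σ_{k≥0} (2k)^n / (2k)!!. -/

import Mathlib

open scoped BigOperators

/-- The ground set `[±n] = {±1, …, ±n}`. -/
noncomputable def pmSet (n : ℕ) : Finset ℤ := (Finset.Icc (-(n : ℤ)) n).erase 0

/-- The block `-B` obtained by negating all elements of `B`. -/
def negBlock (B : Finset ℤ) : Finset ℤ := B.image (fun x => -x)

/-- `π` is a set partition of `[±n]` of type `Bₙ`. -/
def IsBnPartition (n : ℕ) (π : Finset (Finset ℤ)) : Prop :=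
  (∀ B ∈ π, B ≠ ∅) ∧ (∀ B ∈ π, B ⊆ pmSet n) ∧
  (∀ x ∈ pmSet n, ∃! B, B ∈ π ∧ x ∈ B) ∧
  (∀ B ∈ π, negBlock B ∈ π) ∧
  (π.filter (fun B => negBlock B = B)).card ≤ 1

/-- The minimal `Bₙ`-partition `0̂ᴮ`, whose blocks are singletons. -/
noncomputable def botB (n : ℕ) : Finset (Finset ℤ) := (pmSet n).image (fun x => ({x} : Finset ℤ))

/-- Common refinement (meet) of two partitions: all nonempty pairwise intersections. -/
def meetB (π π' : Finset (Finset ℤ)) : Finset (Finset ℤ) :=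
  ((π ×ˢ π').image (fun p => p.1 ∩ p.2)).filter (fun B => B ≠ ∅)

/-- `π` and `π'` intersect minimally. -/
def MinInt (n : ℕ) (π π' : Finset (Finset ℤ)) : Prop := meetB π π' = botB n

/-- Common refinement of a family of partitions of `[±n]`. -/
noncomputable def meetFamily (n : ℕ) {r : ℕ} (πs : Fin r → Finset (Finset ℤ)) : Finset (Finset ℤ) :=
  (List.ofFn πs).foldl meetB {pmSet n}

/-- The family `πs` is minimally intersecting. -/
def MinIntFam (n : ℕ) {r : ℕ} (πs : Fin r → Finset (Finset ℤ)) : Prop :=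
  meetFamily n πs = botB n

/-- `π` has a zero-block of half-size `i₀` (with `i₀ = 0` meaning no zero-block). -/
def zeroBlockHalfSize (π : Finset (Finset ℤ)) (i₀ : ℕ) : Prop :=
  ((π.filter (fun B => negBlock B = B)).sum Finset.card) = 2 * i₀

/-- The block pairs of `π` have sizes `i 0, …, i (k-1)`, listed in any order:
the multiset of sizes of non-zero-blocks is the double of the multiset of the `i α`. -/
def blockPairSizes (π : Finset (Finset ℤ)) {k : ℕ} (i : Fin k → ℕ) : Prop :=
  ((π.filter (fun B => negBlock B ≠ B)).val.map Finset.card)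
    = ((List.ofFn i : List ℕ) : Multiset ℕ) + ((List.ofFn i : List ℕ) : Multiset ℕ)

/-- `π` has exactly `l` block pairs. -/
def numBlockPairs (π : Finset (Finset ℤ)) (l : ℕ) : Prop :=
  (π.filter (fun B => negBlock B ≠ B)).card = 2 * l

/-- `π` has no zero-block. -/
def NoZeroBlock (π : Finset (Finset ℤ)) : Prop := ∀ B ∈ π, negBlock B ≠ B

/-- Falling factorial `(x)ₙ = x (x-1) ⋯ (x-n+1)` of a real number. -/
noncomputable def ffall (x : ℝ) (n : ℕ) : ℝ := ∏ i ∈ Finset.range n, (x - i)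

/-!
An odd map `φ : [±n] → [±k]`, i.e. one with `φ (-x) = -φ x`, is determined by its values on
`1, …, n`, so there are `(2k)ⁿ` of them. The fibres of such a map form a `Bₙ`-partition without
zero-block. Conversely, if `π` is such a partition with `j` block pairs, the odd maps with fibre
partition `π` correspond to maps from one block of each pair to `[±k]` with pairwise distinct
absolute values, of which there are `2ʲ (k)ⱼ`. Hence `(2k)ⁿ = ∑_π 2^{j(π)} (k)_{j(π)}`. Dividing
by `(2k)!! = 2ᵏ k!` and summing over `k`, the identity `∑_k (k)ⱼ xᵏ / k! = xʲ eˣ` at `x = 1/2`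
turns the contribution of each `π` into `e^{1/2}`.
-/

open Finset

section SignedSets

variable {n : ℕ} {x : ℤ} {B : Finset ℤ}

theorem mem_pmSet : x ∈ pmSet n ↔ x ≠ 0 ∧ x.natAbs ≤ n := by
  simp only [pmSet, mem_erase, mem_Icc]
  omega

@[simp]
theorem neg_mem_pmSet : -x ∈ pmSet n ↔ x ∈ pmSet n := by
  simp [mem_pmSet]

theorem natCast_add_one_mem_pmSet (i : Fin n) : (i : ℤ) + 1 ∈ pmSet n :=
  mem_pmSet.2 ⟨by omega, by omega⟩

theorem card_pmSet (n : ℕ) : (pmSet n).card = 2 * n := by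
  rw [pmSet, card_erase_of_mem (by simp), Int.card_Icc]
  omega

@[simp]
theorem mem_negBlock : x ∈ negBlock B ↔ -x ∈ B := by
  simp [negBlock, neg_eq_iff_eq_neg]

@[simp]
theorem negBlock_negBlock (B : Finset ℤ) : negBlock (negBlock B) = B := by
  ext
  simp

end SignedSets

namespace IsBnPartition

variable {n : ℕ} {π : Finset (Finset ℤ)} {B C : Finset ℤ} {x : ℤ}

theorem subset_pmSet (hπ : IsBnPartition n π) (hB : B ∈ π) : B ⊆ pmSet n := hπ.2.1 B hB

theorem nonempty (hπ : IsBnPartition n π) (hB : B ∈ π) : B.Nonempty :=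
  nonempty_iff_ne_empty.2 (hπ.1 B hB)

theorem negBlock_mem (hπ : IsBnPartition n π) (hB : B ∈ π) : negBlock B ∈ π :=
  hπ.2.2.2.1 B hB

theorem exists_mem (hπ : IsBnPartition n π) (hx : x ∈ pmSet n) : ∃ B ∈ π, x ∈ B :=
  (hπ.2.2.1 x hx).exists

theorem eq_of_mem_of_mem (hπ : IsBnPartition n π) (hB : B ∈ π) (hC : C ∈ π) (hxB : x ∈ B)
    (hxC : x ∈ C) : B = C :=
  (hπ.2.2.1 x (hπ.subset_pmSet hB hxB)).unique ⟨hB, hxB⟩ ⟨hC, hxC⟩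

theorem disjoint_negBlock (hπ : IsBnPartition n π) (hz : NoZeroBlock π) (hB : B ∈ π) :
    Disjoint B (negBlock B) :=
  disjoint_left.2 fun _ hxB hxnB =>
    hz B hB (hπ.eq_of_mem_of_mem (hπ.negBlock_mem hB) hB hxnB hxB)

end IsBnPartition

/-- A choice of one block out of each pair `{B, -B}`. -/
def posBlocks (π : Finset (Finset ℤ)) : Finset (Finset ℤ) :=
  π.filter fun B => (negBlock B).max < B.max

section PosBlocks

variable {n : ℕ} {π : Finset (Finset ℤ)} {B r r' : Finset ℤ} {x : ℤ}

theorem posBlocks_subset (π : Finset (Finset ℤ)) : posBlocks π ⊆ π := filter_subset _ _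

theorem negBlock_mem_posBlocks_iff (hπ : IsBnPartition n π) (hz : NoZeroBlock π) (hB : B ∈ π) :
    negBlock B ∈ posBlocks π ↔ B ∉ posBlocks π := by
  simp only [posBlocks, mem_filter, negBlock_negBlock, hB, hπ.negBlock_mem hB, true_and, not_lt]
  obtain ⟨a, ha⟩ := max_of_nonempty (hπ.nonempty hB)
  have hne : B.max ≠ (negBlock B).max := fun h =>
    disjoint_left.1 (hπ.disjoint_negBlock hz hB) (mem_of_max ha) (mem_of_max (h ▸ ha))
  exact ⟨le_of_lt, fun h => lt_of_le_of_ne h hne⟩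

theorem exists_posBlocks_mem (hπ : IsBnPartition n π) (hz : NoZeroBlock π)
    (hx : x ∈ pmSet n) : ∃ r ∈ posBlocks π, x ∈ r ∨ -x ∈ r := by
  obtain ⟨B, hB, hxB⟩ := hπ.exists_mem hx
  by_cases h : B ∈ posBlocks π
  · exact ⟨B, h, Or.inl hxB⟩
  · exact ⟨negBlock B, (negBlock_mem_posBlocks_iff hπ hz hB).2 h, Or.inr (by simpa)⟩

theorem neg_notMem_posBlocks (hπ : IsBnPartition n π) (hz : NoZeroBlock π)
    (hr : r ∈ posBlocks π) (hr' : r' ∈ posBlocks π) (hx : x ∈ r) : -x ∉ r' := by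
  intro hx'
  have hr'π := posBlocks_subset π hr'
  have h : r = negBlock r' :=
    hπ.eq_of_mem_of_mem (posBlocks_subset π hr) (hπ.negBlock_mem hr'π) hx (by simpa)
  exact (negBlock_mem_posBlocks_iff hπ hz hr'π).1 (h ▸ hr) hr'

theorem eq_of_odd_of_eqOn_posBlocks (hπ : IsBnPartition n π) (hz : NoZeroBlock π)
    {φ φ' : ℤ → ℤ} (hφ : φ.Odd) (hφ' : φ'.Odd) (h : ∀ r ∈ posBlocks π, ∀ x ∈ r, φ x = φ' x)
    (hx : x ∈ pmSet n) : φ x = φ' x := by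
  obtain ⟨r, hr, hxr | hxr⟩ := exists_posBlocks_mem hπ hz hx
  · exact h r hr x hxr
  · rw [← neg_neg x, hφ, hφ', h r hr _ hxr]

end PosBlocks

section KerPartition

variable {n : ℕ} {π : Finset (Finset ℤ)} {φ φ' : ℤ → ℤ}

noncomputable def kerPartition (n : ℕ) (φ : ℤ → ℤ) : Finset (Finset ℤ) :=
  (pmSet n).image fun x => (pmSet n).filter fun y => φ y = φ x

theorem kerPartition_congr (h : ∀ x ∈ pmSet n, φ x = φ' x) :
    kerPartition n φ = kerPartition n φ' := by
  refine image_congr fun x hx => filter_congr fun y hy => ?_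
  rw [h x hx, h y hy]

theorem isBnPartition_kerPartition (hφ : φ.Odd) (hne : ∀ x ∈ pmSet n, φ x ≠ 0) :
    IsBnPartition n (kerPartition n φ) ∧ NoZeroBlock (kerPartition n φ) := by
  have mem_self {x} (hx : x ∈ pmSet n) : x ∈ (pmSet n).filter fun y => φ y = φ x :=
    mem_filter.2 ⟨hx, rfl⟩
  have negBlock_fiber {x} : negBlock ((pmSet n).filter fun y => φ y = φ x)
      = (pmSet n).filter fun y => φ y = φ (-x) := by
    ext y
    simp only [mem_negBlock, mem_filter, neg_mem_pmSet, hφ y, hφ x, neg_eq_iff_eq_neg]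
  have hz : NoZeroBlock (kerPartition n φ) := by
    simp only [NoZeroBlock, kerPartition, forall_mem_image, negBlock_fiber]
    intro x hx h
    have := (mem_filter.1 (h ▸ mem_self hx)).2
    rw [hφ x] at this
    exact hne x hx (by linarith)
  refine ⟨⟨?_, ?_, fun x hx => ⟨_, ⟨mem_image_of_mem _ hx, mem_self hx⟩, ?_⟩, ?_, ?_⟩, hz⟩
  · simpa [kerPartition, ← nonempty_iff_ne_empty] using fun x hx => ⟨x, mem_self hx⟩
  · simp [kerPartition]
  · rintro B ⟨hB, hxB⟩
    obtain ⟨y, -, rfl⟩ := mem_image.1 hB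
    ext z
    simp only [mem_filter] at hxB ⊢
    rw [hxB.2]
  · simp only [kerPartition, forall_mem_image, negBlock_fiber]
    exact fun x hx => mem_image_of_mem _ (neg_mem_pmSet.2 hx)
  · rw [filter_false_of_mem hz, card_empty]
    exact zero_le_one

theorem kerPartition_eq_iff (hπ : IsBnPartition n π) :
    kerPartition n φ = π ↔ ∀ B ∈ π, ∀ x ∈ B, ∀ y ∈ pmSet n, (φ y = φ x ↔ y ∈ B) := by
  have fiber_eq {B x} (hB : B ∈ π) (h : ∀ y ∈ pmSet n, (φ y = φ x ↔ y ∈ B)) :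
      (pmSet n).filter (fun y => φ y = φ x) = B := by
    ext y
    rw [mem_filter]
    exact ⟨fun hy => (h y hy.1).1 hy.2, fun hy =>
      have hyn := hπ.subset_pmSet hB hy
      ⟨hyn, (h y hyn).2 hy⟩⟩
  constructor
  · rintro rfl B hB x hxB y hy
    obtain ⟨x₀, -, rfl⟩ := mem_image.1 hB
    rw [(mem_filter.1 hxB).2, mem_filter]
    exact ⟨fun h => ⟨hy, h⟩, And.right⟩
  · intro h
    ext B
    simp only [kerPartition, mem_image]
    constructor
    · rintro ⟨x, hx, rfl⟩
      obtain ⟨C, hC, hxC⟩ := hπ.exists_mem hx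
      rwa [fiber_eq hC (h C hC x hxC)]
    · intro hB
      obtain ⟨x, hx⟩ := hπ.nonempty hB
      exact ⟨x, hπ.subset_pmSet hB hx, fiber_eq hB (h B hB x hx)⟩

end KerPartition

section OddExt

variable {n k : ℕ} {v : Fin n → ℤ} {x : ℤ}

/-- The odd map taking the value `v i` at `i + 1`; it vanishes outside `[±n]`. -/
def oddExt (v : Fin n → ℤ) (x : ℤ) : ℤ :=
  x.sign * if h : x.natAbs - 1 < n then v ⟨x.natAbs - 1, h⟩ else 0

theorem oddExt_odd (v : Fin n → ℤ) : (oddExt v).Odd := fun x => by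
  simp only [oddExt, Int.sign_neg, Int.natAbs_neg, neg_mul]

theorem oddExt_natCast_add_one (v : Fin n → ℤ) (i : Fin n) : oddExt v (i + 1) = v i := by
  have : ((i : ℤ) + 1).natAbs - 1 = i := by omega
  simp [oddExt, this, Int.sign_eq_one_of_pos (by omega : (0 : ℤ) < i + 1)]

theorem oddExt_eq_of_odd {φ : ℤ → ℤ} (hφ : φ.Odd) (hx : x ∈ pmSet n) :
    oddExt (fun i : Fin n => φ (i + 1)) x = φ x := by
  obtain ⟨hx0, hxn⟩ := mem_pmSet.1 hx
  have hidx : ((x.natAbs - 1 : ℕ) : ℤ) + 1 = |x| := by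
    rw [← Int.natCast_natAbs]
    omega
  rw [oddExt, dif_pos (by omega), hidx]
  rcases lt_or_gt_of_ne hx0 with hneg | hpos
  · rw [Int.sign_eq_neg_one_of_neg hneg, abs_of_neg hneg, hφ]
    ring
  · rw [Int.sign_eq_one_of_pos hpos, abs_of_pos hpos, one_mul]

theorem oddExt_mem_pmSet (hv : ∀ i, v i ∈ pmSet k) (hx : x ∈ pmSet n) : oddExt v x ∈ pmSet k := by
  obtain ⟨hx0, hxn⟩ := mem_pmSet.1 hx
  obtain ⟨hv0, hvk⟩ := mem_pmSet.1 (hv ⟨x.natAbs - 1, by omega⟩)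
  rw [oddExt, dif_pos (by omega), mem_pmSet, Int.natAbs_mul, Int.natAbs_sign_of_ne_zero hx0,
    one_mul]
  exact ⟨mul_ne_zero (mt Int.sign_eq_zero_iff_zero.1 hx0) hv0, hvk⟩

end OddExt

section SignedInjections

variable {ι : Type*} [Fintype ι] [DecidableEq ι] {k : ℕ} {ψ : ι → ℤ}

variable (ι k) in
noncomputable def signedInjections : Finset (ι → ℤ) :=
  (Fintype.piFinset fun _ : ι => pmSet k).filter fun ψ => Function.Injective (Int.natAbs ∘ ψ)

theorem mem_signedInjections :
    ψ ∈ signedInjections ι k ↔ (∀ i, ψ i ∈ pmSet k) ∧ Function.Injective (Int.natAbs ∘ ψ) := by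
  simp [signedInjections]

theorem mem_pmSet_of_mem_signedInjections (hψ : ψ ∈ signedInjections ι k) (i : ι) :
    ψ i ≠ 0 ∧ (ψ i).natAbs ≤ k :=
  mem_pmSet.1 ((mem_signedInjections.1 hψ).1 i)

variable (ι k) in
noncomputable def signedInjectionsEquiv : signedInjections ι k ≃ (ι ↪ Fin k) × (ι → Bool) where
  toFun ψ := (⟨fun i => ⟨(ψ.1 i).natAbs - 1, by grind [mem_pmSet_of_mem_signedInjections ψ.2 i]⟩,
      fun i j h => (mem_signedInjections.1 ψ.2).2.eq_iff.1 (by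
        have := mem_pmSet_of_mem_signedInjections ψ.2 i
        have := mem_pmSet_of_mem_signedInjections ψ.2 j
        simp only [Fin.mk.injEq, Function.comp_apply] at h ⊢
        omega)⟩,
    fun i => decide (0 < ψ.1 i))
  invFun p := ⟨fun i => if p.2 i then (p.1 i : ℤ) + 1 else -((p.1 i : ℤ) + 1), by
      refine mem_signedInjections.2 ⟨fun i => ?_, fun i j h => p.1.injective.eq_iff.1 ?_⟩
      · have := (p.1 i).isLt
        rw [mem_pmSet]
        split_ifs <;> omega
      · simp only [Function.comp_apply] at h
        ext
        split_ifs at h <;> omega⟩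
  left_inv ψ := Subtype.ext <| funext fun i => by
    have := mem_pmSet_of_mem_signedInjections ψ.2 i
    show (if decide (0 < ψ.1 i) then (((ψ.1 i).natAbs - 1 : ℕ) : ℤ) + 1
      else -((((ψ.1 i).natAbs - 1 : ℕ) : ℤ) + 1)) = ψ.1 i
    split_ifs with h <;> simp only [decide_eq_true_eq] at h <;> omega
  right_inv p := by
    refine Prod.ext (Function.Embedding.ext fun i => Fin.ext ?_) (funext fun i => ?_)
    · show (if p.2 i then ((p.1 i : ℕ) : ℤ) + 1 else -(((p.1 i : ℕ) : ℤ) + 1)).natAbs - 1 = p.1 i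
      split_ifs <;> omega
    · show decide (0 < if p.2 i then ((p.1 i : ℕ) : ℤ) + 1 else -(((p.1 i : ℕ) : ℤ) + 1)) = p.2 i
      cases p.2 i <;> simp

variable (ι k) in
theorem card_signedInjections :
    (signedInjections ι k).card = k.descFactorial (Fintype.card ι) * 2 ^ Fintype.card ι := by
  rw [← Fintype.card_coe, Fintype.card_congr (signedInjectionsEquiv ι k), Fintype.card_prod,
    Fintype.card_embedding_eq, Fintype.card_fun, Fintype.card_fin, Fintype.card_bool]

end SignedInjections

section BlockVal

variable {n k : ℕ} {π : Finset (Finset ℤ)} {x : ℤ}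

/-- The odd map taking the value `ψ r` on each block `r ∈ posBlocks π`: for `x ∈ [±n]` exactly one
term of the sum is nonzero. -/
def blockVal (π : Finset (Finset ℤ)) (ψ : posBlocks π → ℤ) (x : ℤ) : ℤ :=
  ∑ r, ((if x ∈ r.1 then ψ r else 0) - if -x ∈ r.1 then ψ r else 0)

theorem blockVal_odd (ψ : posBlocks π → ℤ) : (blockVal π ψ).Odd := fun x => by
  simp only [blockVal, neg_neg, ← sum_neg_distrib, neg_sub]

theorem blockVal_eq (hπ : IsBnPartition n π) (hz : NoZeroBlock π) (ψ : posBlocks π → ℤ)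
    {r : posBlocks π} (hx : x ∈ r.1) : blockVal π ψ x = ψ r := by
  rw [blockVal, sum_eq_single r]
  · simp [hx, neg_notMem_posBlocks hπ hz r.2 r.2 hx]
  · intro r' _ hne
    have hxr' : x ∉ r'.1 := fun h => hne <| Subtype.ext <|
      hπ.eq_of_mem_of_mem (posBlocks_subset π r'.2) (posBlocks_subset π r.2) h hx
    simp [hxr', neg_notMem_posBlocks hπ hz r.2 r'.2 hx]
  · simp

theorem blockVal_mem_pmSet (hπ : IsBnPartition n π) (hz : NoZeroBlock π) {ψ : posBlocks π → ℤ}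
    (hψ : ∀ r, ψ r ∈ pmSet k) (hx : x ∈ pmSet n) : blockVal π ψ x ∈ pmSet k := by
  obtain ⟨r, hr, hxr | hxr⟩ := exists_posBlocks_mem hπ hz hx
  · rw [blockVal_eq hπ hz ψ (r := ⟨r, hr⟩) hxr]
    exact hψ _
  · rw [← neg_neg x, blockVal_odd, blockVal_eq hπ hz ψ (r := ⟨r, hr⟩) hxr, neg_mem_pmSet]
    exact hψ _

theorem kerPartition_blockVal (hπ : IsBnPartition n π) (hz : NoZeroBlock π)
    {ψ : posBlocks π → ℤ} (hψ : ψ ∈ signedInjections (posBlocks π) k) :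
    kerPartition n (blockVal π ψ) = π := by
  obtain ⟨hψk, hψinj⟩ := mem_signedInjections.1 hψ
  have hpos : ∀ r : posBlocks π, ∀ x ∈ r.1, ∀ y ∈ pmSet n,
      (blockVal π ψ y = blockVal π ψ x ↔ y ∈ r.1) := by
    intro r x hx y hy
    rw [blockVal_eq hπ hz ψ hx]
    obtain ⟨s, hs, hys | hys⟩ := exists_posBlocks_mem hπ hz hy
    · rw [blockVal_eq hπ hz ψ (r := ⟨s, hs⟩) hys]
      refine ⟨fun h => ?_, fun hyr => ?_⟩
      · rw [← hψinj (congrArg Int.natAbs h)]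
        exact hys
      · obtain rfl : s = r.1 :=
          hπ.eq_of_mem_of_mem (posBlocks_subset π hs) (posBlocks_subset π r.2) hys hyr
        rfl
    · rw [← neg_neg y, blockVal_odd, blockVal_eq hπ hz ψ (r := ⟨s, hs⟩) hys]
      refine ⟨fun h => ?_, fun hyr => ?_⟩
      · have hsr : ⟨s, hs⟩ = r := hψinj (by simpa using congrArg Int.natAbs h)
        rw [hsr, neg_eq_iff_add_eq_zero, ← two_mul] at h
        exact absurd (by simpa using h) (mem_pmSet.1 (hψk r)).1
      · exact absurd hys (neg_notMem_posBlocks hπ hz r.2 hs (by simpa using hyr))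
  rw [kerPartition_eq_iff hπ]
  intro B hB x hxB y hy
  by_cases hBpos : B ∈ posBlocks π
  · exact hpos ⟨B, hBpos⟩ x hxB y hy
  · have := hpos ⟨_, (negBlock_mem_posBlocks_iff hπ hz hB).2 hBpos⟩ (-x) (by simpa)
      (-y) (neg_mem_pmSet.2 hy)
    simpa [blockVal_odd ψ _] using this

end BlockVal

section Counting

variable {n k : ℕ} {π : Finset (Finset ℤ)} {φ : ℤ → ℤ} {x : posBlocks π → ℤ}

theorem natAbs_injective_of_kerPartition_eq (hπ : IsBnPartition n π) (hz : NoZeroBlock π)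
    (hφ : φ.Odd) (hker : kerPartition n φ = π) (hx : ∀ r, x r ∈ r.1) :
    Function.Injective (Int.natAbs ∘ fun r => φ (x r)) := by
  have hfiber := (kerPartition_eq_iff hπ).1 hker
  have hxn r : x r ∈ pmSet n := hπ.subset_pmSet (posBlocks_subset π r.2) (hx r)
  intro r r' h
  rcases Int.natAbs_eq_natAbs_iff.1 h with h | h
  · have hxr' := (hfiber r (posBlocks_subset π r.2) (x r) (hx r) (x r') (hxn r')).1 h.symm
    exact Subtype.ext <|
      hπ.eq_of_mem_of_mem (posBlocks_subset π r.2) (posBlocks_subset π r'.2) hxr' (hx r')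
  · rw [← hφ] at h
    have hxr' := (hfiber r (posBlocks_subset π r.2) (x r) (hx r) (-x r')
      (neg_mem_pmSet.2 (hxn r'))).1 h.symm
    exact absurd hxr' (neg_notMem_posBlocks hπ hz r'.2 r.2 (hx r'))

theorem blockVal_eq_of_kerPartition_eq (hπ : IsBnPartition n π) (hz : NoZeroBlock π)
    (hφ : φ.Odd) (hker : kerPartition n φ = π) (hx : ∀ r, x r ∈ r.1) {y : ℤ}
    (hy : y ∈ pmSet n) : blockVal π (fun r => φ (x r)) y = φ y := by
  refine eq_of_odd_of_eqOn_posBlocks hπ hz (blockVal_odd _) hφ (fun r hr z hzr => ?_) hy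
  rw [blockVal_eq hπ hz _ (r := ⟨r, hr⟩) hzr]
  exact ((kerPartition_eq_iff hπ).1 hker r (posBlocks_subset π hr) z hzr _
    (hπ.subset_pmSet (posBlocks_subset π hr) (hx _))).2 (hx _)

theorem card_oddExt_fiber (hπ : IsBnPartition n π) (hz : NoZeroBlock π) :
    ((Fintype.piFinset fun _ : Fin n => pmSet k).filter
      fun v => kerPartition n (oddExt v) = π).card = (signedInjections (posBlocks π) k).card := by
  have oddExt_blockVal (ψ : posBlocks π → ℤ) {x} (hx : x ∈ pmSet n) :
      oddExt (fun i : Fin n => blockVal π ψ (i + 1)) x = blockVal π ψ x :=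
    oddExt_eq_of_odd (blockVal_odd ψ) hx
  symm
  refine card_bij (fun ψ _ i => blockVal π ψ (i + 1)) (fun ψ hψ => ?_)
    (fun ψ _ ψ' _ h => ?_) (fun v hv => ?_)
  · rw [mem_filter, Fintype.mem_piFinset, kerPartition_congr fun x hx => oddExt_blockVal ψ hx]
    exact ⟨fun i => blockVal_mem_pmSet hπ hz (mem_signedInjections.1 hψ).1
      (natCast_add_one_mem_pmSet i), kerPartition_blockVal hπ hz hψ⟩
  · funext r
    obtain ⟨x, hx⟩ := hπ.nonempty (posBlocks_subset π r.2)
    have hxn := hπ.subset_pmSet (posBlocks_subset π r.2) hx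
    rw [← blockVal_eq hπ hz ψ hx, ← blockVal_eq hπ hz ψ' hx, ← oddExt_blockVal ψ hxn,
      ← oddExt_blockVal ψ' hxn, h]
  · obtain ⟨hvk, hker⟩ := mem_filter.1 hv
    rw [Fintype.mem_piFinset] at hvk
    choose x hx using fun r : posBlocks π => hπ.nonempty (posBlocks_subset π r.2)
    refine ⟨fun r => oddExt v (x r), mem_signedInjections.2 ⟨fun r => oddExt_mem_pmSet hvk
      (hπ.subset_pmSet (posBlocks_subset π r.2) (hx r)),
        natAbs_injective_of_kerPartition_eq hπ hz (oddExt_odd v) hker hx⟩, funext fun i => ?_⟩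
    rw [blockVal_eq_of_kerPartition_eq hπ hz (oddExt_odd v) hker hx
      (natCast_add_one_mem_pmSet i), oddExt_natCast_add_one]

open Classical in
noncomputable def zeroFreeBnPartitions (n : ℕ) : Finset (Finset (Finset ℤ)) :=
  (pmSet n).powerset.powerset.filter fun π => IsBnPartition n π ∧ NoZeroBlock π

theorem coe_zeroFreeBnPartitions (n : ℕ) :
    (zeroFreeBnPartitions n : Set (Finset (Finset ℤ))) =
      {π | IsBnPartition n π ∧ NoZeroBlock π} := by
  ext π
  simp only [zeroFreeBnPartitions, coe_filter, mem_powerset, Set.mem_ofPred_eq,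
    and_iff_right_iff_imp]
  exact fun h B hB => mem_powerset.2 (h.1.subset_pmSet hB)

theorem two_mul_pow_eq_sum_descFactorial (n k : ℕ) :
    (2 * k) ^ n = ∑ π ∈ zeroFreeBnPartitions n,
      k.descFactorial (posBlocks π).card * 2 ^ (posBlocks π).card := by
  calc (2 * k) ^ n = (Fintype.piFinset fun _ : Fin n => pmSet k).card := by
        simp [card_pmSet]
    _ = ∑ π ∈ zeroFreeBnPartitions n, ((Fintype.piFinset fun _ : Fin n => pmSet k).filter
          fun v => kerPartition n (oddExt v) = π).card := by
        refine card_eq_sum_card_fiberwise fun v hv => ?_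
        rw [mem_coe, ← mem_coe, coe_zeroFreeBnPartitions]
        exact isBnPartition_kerPartition (oddExt_odd v) fun x hx =>
          (mem_pmSet.1 (oddExt_mem_pmSet (Fintype.mem_piFinset.1 hv) hx)).1
    _ = _ := sum_congr rfl fun π hπ => by
        rw [← mem_coe, coe_zeroFreeBnPartitions] at hπ
        rw [card_oddExt_fiber hπ.1 hπ.2, card_signedInjections, Fintype.card_coe]

end Counting

theorem hasSum_descFactorial_mul_pow_div_factorial (j : ℕ) (x : ℝ) :
    HasSum (fun k : ℕ => (k.descFactorial j : ℝ) * x ^ k / k.factorial) (x ^ j * Real.exp x) := by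
  rw [← hasSum_nat_add_iff' j]
  have hhead : ∑ k ∈ range j, (k.descFactorial j : ℝ) * x ^ k / k.factorial = 0 :=
    sum_eq_zero fun k hk => by simp [Nat.descFactorial_eq_zero_iff_lt.2 (mem_range.1 hk)]
  have hshift (m : ℕ) : ((m + j).descFactorial j : ℝ) * x ^ (m + j) / (m + j).factorial
      = x ^ j * (x ^ m / m.factorial) := by
    have h := Nat.factorial_mul_descFactorial (Nat.le_add_left j m)
    rw [Nat.add_sub_cancel] at h
    rw [← h]
    push_cast
    field_simp
    ring
  simp only [hhead, sub_zero, hshift]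
  rw [Real.exp_eq_exp_ℝ]
  exact (NormedSpace.expSeries_div_hasSum_exp x).mul_left _

theorem hasSum_two_mul_pow_div_two_pow_mul_factorial (n : ℕ) :
    HasSum (fun k : ℕ => ((2 * k : ℕ) : ℝ) ^ n / ((2 : ℝ) ^ k * k.factorial))
      ((zeroFreeBnPartitions n).card * Real.exp (1 / 2)) := by
  have hterm (k : ℕ) : ((2 * k : ℕ) : ℝ) ^ n / ((2 : ℝ) ^ k * k.factorial) =
      ∑ π ∈ zeroFreeBnPartitions n, 2 ^ (posBlocks π).card *
        ((k.descFactorial (posBlocks π).card : ℝ) * (1 / 2) ^ k / k.factorial) := by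
    rw [← Nat.cast_pow, two_mul_pow_eq_sum_descFactorial, Nat.cast_sum, sum_div]
    refine sum_congr rfl fun π _ => ?_
    push_cast
    rw [one_div, inv_pow]
    field_simp
  have hval : ∑ π ∈ zeroFreeBnPartitions n, 2 ^ (posBlocks π).card *
      ((1 / 2 : ℝ) ^ (posBlocks π).card * Real.exp (1 / 2)) =
        (zeroFreeBnPartitions n).card * Real.exp (1 / 2) := by
    simp
  simp_rw [hterm, ← hval]
  exact hasSum_sum fun π _ =>
    (hasSum_descFactorial_mul_pow_div_factorial (posBlocks π).card (1 / 2)).mul_left _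

theorem stmt8_general (n : ℕ) :
    Summable (fun k : ℕ => ((2 * k : ℕ) : ℝ) ^ n / ((2 : ℝ) ^ k * k.factorial)) ∧
    (Set.ncard {π : Finset (Finset ℤ) | IsBnPartition n π ∧ NoZeroBlock π} : ℝ)
      = (1 / Real.sqrt (Real.exp 1))
        * ∑' k : ℕ, ((2 * k : ℕ) : ℝ) ^ n / ((2 : ℝ) ^ k * k.factorial) := by
  have hsum := hasSum_two_mul_pow_div_two_pow_mul_factorial n
  refine ⟨hsum.summable, ?_⟩
  rw [hsum.tsum_eq, ← coe_zeroFreeBnPartitions, Set.ncard_coe_finset, ← Real.exp_half]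
  field_simp

/-- The number of `Bₙ`-partitions without zero-block:
`Nₙ = (1/√e) Σ_{k≥0} (2k)ⁿ/(2k)!!`. -/
theorem stmt8 (n : ℕ) (hn : 1 ≤ n) :
    Summable (fun k : ℕ => ((2 * k : ℕ) : ℝ) ^ n / ((2 : ℝ) ^ k * k.factorial)) ∧
    (Set.ncard {π : Finset (Finset ℤ) | IsBnPartition n π ∧ NoZeroBlock π} : ℝ)
      = (1 / Real.sqrt (Real.exp 1))
        * ∑' k : ℕ, ((2 * k : ℕ) : ℝ) ^ n / ((2 : ℝ) ^ k * k.factorial) :=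
  stmt8_general n
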